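/- arXiv:1910.14427 — 4 statements merged into one kernel-verified Lean document; each statement's English description precedes it below -/
import Mathlib

section
/- Let x : [s,∞) → ℝ^n be a continuously differentiable solution of the homogeneous bilinear equation ẋ(t) = A x(t) + Σ_{k=1}^m N_k x(t) u_k(t) with x(s) = x₀. Then the matrix-valued function X(t) = x(t) x(t)^T satisfies the matrix differential inequality Ẋ(t) ≼ A X(t) + X(t) A^T + Σ_{k=1}^m N_k X(t) N_k^T + ‖u⁰(t)‖₂² X(t) for all t ≥ s, i.e., the right-hand side minus Ẋ(t) is positive semidefinite for every t ≥ s, where X(s) = x₀ x₀^T. -/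
/-!
Writing `ẋ = A x + Σₖ u⁰ₖ Nₖ x` (the terms with `Nₖ = 0` vanish anyway), the product rule gives
`Ẋ = ẋ xᵀ + x ẋᵀ`, and completing the square in each `k` yields the identity
`A X + X Aᵀ + Σₖ Nₖ X Nₖᵀ + ‖u⁰‖² X - Ẋ = Σₖ (Nₖ x - u⁰ₖ x)(Nₖ x - u⁰ₖ x)ᵀ`,
a sum of positive semidefinite rank-one matrices.
-/

open Matrix

namespace Matrix

variable {ι κ α : Type*}

theorem sum_vecMulVec [NonUnitalNonAssocSemiring α] (s : Finset κ) (w : κ → ι → α)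
    (v : ι → α) : vecMulVec (∑ k ∈ s, w k) v = ∑ k ∈ s, vecMulVec (w k) v := by
  ext i j
  simp [vecMulVec_apply, sum_apply, Finset.sum_mul]

theorem vecMulVec_sum [NonUnitalNonAssocSemiring α] (s : Finset κ) (w : ι → α)
    (v : κ → ι → α) : vecMulVec w (∑ k ∈ s, v k) = ∑ k ∈ s, vecMulVec w (v k) := by
  ext i j
  simp [vecMulVec_apply, sum_apply, Finset.mul_sum]

theorem smul_mulVec_eq_ite_smul_mulVec [Fintype ι] [Semiring α] (M : Matrix ι ι α)
    [Decidable (M = 0)] (c : α) (x : ι → α) :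
    c • M *ᵥ x = (if M = 0 then 0 else c) • M *ᵥ x := by
  split_ifs with h <;> simp [h]

theorem vecMulVec_sub_smul_self [CommRing α] (p x : ι → α) (c : α) :
    vecMulVec (p - c • x) (p - c • x) =
      vecMulVec p p - c • (vecMulVec p x + vecMulVec x p) + c ^ 2 • vecMulVec x x := by
  simp only [sub_vecMulVec, vecMulVec_sub, smul_vecMulVec, vecMulVec_smul]
  module

theorem lyapunov_add_sq_smul_sub_eq_sum_vecMulVec [CommRing α] [Fintype ι] [Fintype κ]
    (A : Matrix ι ι α) (N : κ → Matrix ι ι α) (c : κ → α) (x : ι → α) :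
    let d := A *ᵥ x + ∑ k, c k • N k *ᵥ x
    A * vecMulVec x x + vecMulVec x x * Aᵀ + ∑ k, N k * vecMulVec x x * (N k)ᵀ
        + (∑ k, c k ^ 2) • vecMulVec x x - (vecMulVec d x + vecMulVec x d)
      = ∑ k, vecMulVec (N k *ᵥ x - c k • x) (N k *ᵥ x - c k • x) := by
  simp only [vecMulVec_sub_smul_self, mul_vecMulVec, vecMulVec_mul, vecMul_transpose,
    add_vecMulVec, vecMulVec_add, sum_vecMulVec, vecMulVec_sum, smul_vecMulVec, vecMulVec_smul,
    Finset.sum_add_distrib, Finset.sum_sub_distrib, Finset.sum_smul, smul_add]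
  abel

theorem posSemidef_sum_vecMulVec_self {n : Type*} [Fintype n] (s : Finset κ) (v : κ → n → ℝ) :
    (∑ k ∈ s, vecMulVec (v k) (v k)).PosSemidef :=
  posSemidef_sum s fun k _ => by simpa using posSemidef_vecMulVec_self_star (v k)

end Matrix

theorem HasDerivAt.vecMulVec_apply {𝕜 ι : Type*} [NontriviallyNormedField 𝕜]
    {x y : 𝕜 → ι → 𝕜} {x' y' : ι → 𝕜} {t : 𝕜}
    (hx : ∀ i, HasDerivAt (fun τ => x τ i) (x' i) t)
    (hy : ∀ i, HasDerivAt (fun τ => y τ i) (y' i) t) (i j : ι) :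
    HasDerivAt (fun τ => vecMulVec (x τ) (y τ) i j)
      ((vecMulVec x' (y t) + vecMulVec (x t) y') i j) t :=
  (hx i).mul (hy j)

open scoped Classical in
theorem lemma1_matrix_differential_inequality_general
    {n m : ℕ}
    (A : Matrix (Fin n) (Fin n) ℝ) (N : Fin m → Matrix (Fin n) (Fin n) ℝ)
    (s : ℝ) (u : ℝ → Fin m → ℝ)
    -- u⁰ : components of u with nonzero N_k
    (u0 : ℝ → Fin m → ℝ) (hu0 : ∀ t k, u0 t k = if N k = 0 then 0 else u t k)
    -- x solves the homogeneous bilinear equation on [s,∞) with x(s) = x₀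
    (x : ℝ → Fin n → ℝ) (x0 : Fin n → ℝ) (hxs : x s = x0)
    (hx : ∀ t ∈ Set.Ici s, ∀ i, HasDerivAt (fun τ => x τ i)
      ((A.mulVec (x t) + ∑ k, u t k • (N k).mulVec (x t)) i) t)
    -- X(t) = x(t) x(t)ᵀ and X' is its (entrywise) derivative
    (X X' : ℝ → Matrix (Fin n) (Fin n) ℝ)
    (hX : ∀ t, X t = vecMulVec (x t) (x t))
    (hX' : ∀ t ∈ Set.Ici s, ∀ i j, HasDerivAt (fun τ => X τ i j) (X' t i j) t) :
    X s = vecMulVec x0 x0 ∧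
      ∀ t ∈ Set.Ici s,
        (A * X t + X t * Aᵀ + (∑ k, N k * X t * (N k)ᵀ) + (∑ k, (u0 t k) ^ 2) • X t
          - X' t).PosSemidef := by
  refine ⟨by rw [hX, hxs], fun t ht => ?_⟩
  have hx0 : ∀ i, HasDerivAt (fun τ => x τ i)
      ((A *ᵥ x t + ∑ k, u0 t k • N k *ᵥ x t) i) t := by
    simpa only [hu0, ← smul_mulVec_eq_ite_smul_mulVec] using hx t ht
  have hX't : X' t = vecMulVec (A *ᵥ x t + ∑ k, u0 t k • N k *ᵥ x t) (x t)
      + vecMulVec (x t) (A *ᵥ x t + ∑ k, u0 t k • N k *ᵥ x t) := by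
    ext i j
    refine (hX' t ht i j).unique ?_
    simpa only [hX] using HasDerivAt.vecMulVec_apply hx0 hx0 i j
  rw [hX't, hX, lyapunov_add_sq_smul_sub_eq_sum_vecMulVec]
  exact posSemidef_sum_vecMulVec_self _ _

/-- **Lemma 1.** If `x` solves the homogeneous bilinear equation on `[s,∞)`,
then `X(t) = x(t) x(t)ᵀ` satisfies the matrix differential inequality
`Ẋ(t) ≼ A X(t) + X(t) Aᵀ + Σ_k N_k X(t) N_kᵀ + ‖u⁰(t)‖₂² X(t)`, with `X(s) = x₀ x₀ᵀ`. -/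
theorem lemma1_matrix_differential_inequality
    {n m : ℕ}
    (A : Matrix (Fin n) (Fin n) ℝ) (N : Fin m → Matrix (Fin n) (Fin n) ℝ)
    (s : ℝ) (u : ℝ → Fin m → ℝ) (hu : Continuous u)
    -- u⁰ : components of u with nonzero N_k
    (u0 : ℝ → Fin m → ℝ) (hu0 : ∀ t k, u0 t k = if N k = 0 then 0 else u t k)
    -- x solves the homogeneous bilinear equation on [s,∞) with x(s) = x₀
    (x : ℝ → Fin n → ℝ) (x0 : Fin n → ℝ) (hxs : x s = x0)
    (hx : ∀ t ∈ Set.Ici s, ∀ i, HasDerivAt (fun τ => x τ i)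
      ((A.mulVec (x t) + ∑ k, u t k • (N k).mulVec (x t)) i) t)
    -- X(t) = x(t) x(t)ᵀ and X' is its (entrywise) derivative
    (X X' : ℝ → Matrix (Fin n) (Fin n) ℝ)
    (hX : ∀ t, X t = vecMulVec (x t) (x t))
    (hX' : ∀ t ∈ Set.Ici s, ∀ i j, HasDerivAt (fun τ => X τ i j) (X' t i j) t) :
    X s = vecMulVec x0 x0 ∧
      ∀ t ∈ Set.Ici s,
        (A * X t + X t * Aᵀ + (∑ k, N k * X t * (N k)ᵀ) + (∑ k, (u0 t k) ^ 2) • X t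
          - X' t).PosSemidef :=
  lemma1_matrix_differential_inequality_general A N s u u0 hu0 x x0 hxs hx X X' hX hX'
end

section
/- (Gronwall lemma for matrix differential equations) Let X(t), t ≥ s ≥ 0, be a continuously differentiable symmetric-matrix-valued function satisfying the matrix differential inequality Ẋ(t) ≼ A X(t) + X(t) A^T + Σ_{k=1}^m N_k X(t) N_k^T + ‖u⁰(t)‖₂² X(t) for all t ≥ s, and let Z(t), t ≥ s, be the solution of the matrix differential equation Ż(t) = A Z(t) + Z(t) A^T + Σ_{k=1}^m N_k Z(t) N_k^T + ‖u⁰(t)‖₂² Z(t). If X(s) ≼ Z(s), then X(t) ≼ Z(t) for all t ≥ s. -/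
/-!
Put `D = Z - X` and `L_t D = A D + D Aᵀ + ∑ₖ Nₖ D Nₖᵀ + ‖u⁰(t)‖² D`, so that `Ḋ - L_t D ≽ 0` and
`D(s) ≽ 0`. The operator `L_t` is cross-positive: if `W ≽ 0` and `W v = 0` then
`vᵀ (L_t W) v ≥ 0`, since `A W + W Aᵀ` contributes `0` and `W ↦ ∑ₖ Nₖ W Nₖᵀ` preserves `≽ 0`.
Let `κ` bound `vᵀ (L_t I) v / vᵀ v` on `[s, T]` and, for `ε > 0`, put
`W(t) = D(t) + φ(t) I` with `φ(t) = ε e^{(κ+1)(t-s)}`; it is positive definite at `t = s`.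
If it became singular, then at the first such time `t₀`, with `W(t₀) v = 0`, the function
`t ↦ vᵀ W(t) v` would have a nonpositive derivative (it is positive before `t₀` and `0` at `t₀`),
whereas `Ḋ ≽ L_t D = L_t W - φ L_t I` and cross-positivity make that derivative at least
`φ(t₀) vᵀ v > 0`. So `W(T) ≻ 0`, and `ε → 0` gives `D(T) ≽ 0`.
The symmetry of `Z - X` comes from uniqueness for the linear equation `Ż = L_t Z`, which `Zᵀ`
solves as well.
-/

open Matrix Set Filter Topology
open scoped Matrix.Norms.Elementwise

theorem HasDerivAt.nonpos_of_forall_Ico_le {g : ℝ → ℝ} {g' a b : ℝ} (hab : a < b)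
    (hd : HasDerivAt g g' b) (hg : ∀ t ∈ Ico a b, g b ≤ g t) : g' ≤ 0 := by
  have hslope : Tendsto (slope g b) (𝓝[<] b) (𝓝 g') :=
    (hasDerivAt_iff_tendsto_slope.1 hd).mono_left (nhdsWithin_mono _ fun _ ht => ne_of_lt ht)
  refine le_of_tendsto hslope ?_
  filter_upwards [Ico_mem_nhdsLT hab] with t ht
  rw [slope_def_field]
  exact div_nonpos_of_nonneg_of_nonpos (sub_nonneg.2 (hg t ht)) (by linarith [ht.2])

theorem IsCompact.exists_first_nonpos {β : Type*} [TopologicalSpace β] [T2Space β] {K : Set β}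
    (hK : IsCompact K) {f : ℝ → β → ℝ} {a b : ℝ}
    (hf : ContinuousOn (Function.uncurry f) (Icc a b ×ˢ K))
    (h : ∃ t ∈ Icc a b, ∃ x ∈ K, f t x ≤ 0) :
    ∃ t ∈ Icc a b, (∃ x ∈ K, f t x ≤ 0) ∧ ∀ τ ∈ Ico a t, ∀ x ∈ K, 0 < f τ x := by
  set S := {t ∈ Icc a b | ∃ x ∈ K, f t x ≤ 0}
  have hS : S = Prod.fst '' ((Icc a b ×ˢ K) ∩ Function.uncurry f ⁻¹' Iic 0) := by
    ext t
    simp [S, and_assoc]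
  have hSc : IsCompact S := by
    rw [hS]
    exact ((isCompact_Icc.prod hK).of_isClosed_subset
      (hf.preimage_isClosed_of_isClosed (isClosed_Icc.prod hK.isClosed) isClosed_Iic)
      inter_subset_left).image continuous_fst
  obtain ⟨ht, hx⟩ := hSc.sInf_mem h
  refine ⟨sInf S, ht, hx, fun τ hτ x hx => ?_⟩
  by_contra! hfx
  exact (csInf_le hSc.bddBelow ⟨⟨hτ.1, hτ.2.le.trans ht.2⟩, x, hx, hfx⟩).not_gt hτ.2

namespace Matrix

section Calculus

variable {m n : Type*} [Fintype n]

theorem hasDerivAt_matrix_iff {M : ℝ → Matrix m n ℝ} {M' : Matrix m n ℝ} {t : ℝ} :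
    HasDerivAt M M' t ↔ ∀ i j, HasDerivAt (fun τ => M τ i j) (M' i j) t :=
  hasDerivAt_pi.trans (forall_congr' fun _ => hasDerivAt_pi)

theorem _root_.HasDerivAt.matrix_transpose [Fintype m] {M : ℝ → Matrix m n ℝ}
    {M' : Matrix m n ℝ} {t : ℝ} (h : HasDerivAt M M' t) : HasDerivAt (fun τ => (M τ)ᵀ) M'ᵀ t :=
  hasDerivAt_matrix_iff.2 fun i j => hasDerivAt_matrix_iff.1 h j i

theorem _root_.HasDerivAt.dotProduct_mulVec {M : ℝ → Matrix n n ℝ} {M' : Matrix n n ℝ} {t : ℝ}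
    (h : HasDerivAt M M' t) (v : n → ℝ) :
    HasDerivAt (fun τ => v ⬝ᵥ (M τ *ᵥ v)) (v ⬝ᵥ (M' *ᵥ v)) t := by
  simp only [dotProduct, mulVec]
  exact HasDerivAt.fun_sum fun i _ => (HasDerivAt.fun_sum fun j _ =>
    (hasDerivAt_matrix_iff.1 h i j).mul_const (v j)).const_mul (v i)

theorem _root_.ContinuousAt.dotProduct_mulVec {α : Type*} [TopologicalSpace α]
    {M : α → Matrix n n ℝ} {v : α → n → ℝ} {x : α} (hM : ContinuousAt M x)
    (hv : ContinuousAt v x) : ContinuousAt (fun y => v y ⬝ᵥ (M y *ᵥ v y)) x := by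
  have hq : Continuous fun q : Matrix n n ℝ × (n → ℝ) => q.2 ⬝ᵥ (q.1 *ᵥ q.2) :=
    continuous_snd.dotProduct (continuous_fst.matrix_mulVec continuous_snd)
  exact hq.continuousAt.comp (hM.prodMk hv)

end Calculus

variable {ι ν : Type*} [Fintype ι]

theorem dotProduct_self_pos {v : ι → ℝ} (hv : v ≠ 0) : 0 < v ⬝ᵥ v := by
  simpa using dotProduct_star_self_pos_iff.2 hv

theorem dotProduct_mulVec_le_sum_abs (M : Matrix ι ι ℝ) (v : ι → ℝ) :
    v ⬝ᵥ (M *ᵥ v) ≤ (∑ i, ∑ j, |M i j|) * (v ⬝ᵥ v) := by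
  have hsq : ∀ i, v i * v i ≤ v ⬝ᵥ v := fun i =>
    Finset.single_le_sum (f := fun j => v j * v j) (fun j _ => mul_self_nonneg _)
      (Finset.mem_univ i)
  have hexpand : v ⬝ᵥ (M *ᵥ v) = ∑ i, ∑ j, M i j * (v i * v j) := by
    simp only [dotProduct, mulVec, Finset.mul_sum]
    exact Finset.sum_congr rfl fun i _ => Finset.sum_congr rfl fun j _ => by ring
  rw [hexpand, Finset.sum_mul]
  refine Finset.sum_le_sum fun i _ => ?_
  rw [Finset.sum_mul]
  refine Finset.sum_le_sum fun j _ => ?_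
  have hij : |v i * v j| ≤ v ⬝ᵥ v := by
    rw [abs_mul]
    nlinarith [hsq i, hsq j, abs_mul_abs_self (v i), abs_mul_abs_self (v j),
      sq_nonneg (|v i| - |v j|)]
  calc M i j * (v i * v j) ≤ |M i j| * |v i * v j| := by rw [← abs_mul]; exact le_abs_self _
    _ ≤ |M i j| * (v ⬝ᵥ v) := mul_le_mul_of_nonneg_left hij (abs_nonneg _)

theorem forall_mem_sphere_dotProduct_mulVec_pos_iff (M : Matrix ι ι ℝ) :
    (∀ u ∈ Metric.sphere (0 : ι → ℝ) 1, 0 < u ⬝ᵥ (M *ᵥ u)) ↔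
      ∀ v : ι → ℝ, v ≠ 0 → 0 < v ⬝ᵥ (M *ᵥ v) := by
  refine ⟨fun h v hv => ?_, fun h u hu => h u (ne_zero_of_mem_unit_sphere ⟨u, hu⟩)⟩
  have hv' : 0 < ‖v‖ := norm_pos_iff.2 hv
  have hu : ‖v‖⁻¹ • v ∈ Metric.sphere (0 : ι → ℝ) 1 := by
    simp [norm_smul, hv'.ne']
  have := h _ hu
  rw [mulVec_smul, dotProduct_smul, smul_dotProduct, smul_eq_mul, smul_eq_mul] at this
  exact pos_of_mul_pos_right (pos_of_mul_pos_right this (inv_pos.2 hv').le) (inv_pos.2 hv').le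

theorem isSymm_of_hasDerivAt {L : ℝ → Matrix ι ι ℝ → Matrix ι ι ℝ}
    (hLT : ∀ t D, (L t D)ᵀ = L t Dᵀ) {s T : ℝ} {K : NNReal}
    (hLip : ∀ t ∈ Ico s T, LipschitzWith K (L t)) {Z : ℝ → Matrix ι ι ℝ}
    (hZ : ∀ t ∈ Icc s T, HasDerivAt Z (L t (Z t)) t) (hs : (Z s).IsSymm) :
    ∀ t ∈ Icc s T, (Z t).IsSymm := by
  have hZT : ∀ t ∈ Icc s T, HasDerivAt (fun τ => (Z τ)ᵀ) (L t (Z t)ᵀ) t := fun t ht =>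
    hLT t (Z t) ▸ (hZ t ht).matrix_transpose
  exact ODE_solution_unique_of_mem_Icc_right (v := L) (s := fun _ => univ)
    (fun t ht => (hLip t ht).lipschitzOnWith)
    (fun t ht => (hZT t ht).continuousAt.continuousWithinAt)
    (fun t ht => (hZT t (Ico_subset_Icc_self ht)).hasDerivWithinAt) (fun _ _ => trivial)
    (fun t ht => (hZ t ht).continuousAt.continuousWithinAt)
    (fun t ht => (hZ t (Ico_subset_Icc_self ht)).hasDerivWithinAt) (fun _ _ => trivial) hs

theorem exists_first_singular {W : ℝ → Matrix ι ι ℝ} {s T : ℝ}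
    (hW : ∀ t ∈ Icc s T, ContinuousAt W t) (hsymm : ∀ t ∈ Icc s T, (W t).IsSymm)
    (hs : ∀ v ≠ 0, 0 < v ⬝ᵥ (W s *ᵥ v)) (h : ∃ t ∈ Icc s T, ∃ v ≠ 0, v ⬝ᵥ (W t *ᵥ v) ≤ 0) :
    ∃ t₀ ∈ Ioc s T, ∃ u ≠ 0, (W t₀).PosSemidef ∧ W t₀ *ᵥ u = 0 ∧
      ∀ τ ∈ Ico s t₀, 0 < u ⬝ᵥ (W τ *ᵥ u) := by
  have hsphere : ∃ t ∈ Icc s T, ∃ u ∈ Metric.sphere (0 : ι → ℝ) 1, u ⬝ᵥ (W t *ᵥ u) ≤ 0 := by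
    obtain ⟨t, ht, v, hv, hWv⟩ := h
    have : ¬ ∀ u ∈ Metric.sphere (0 : ι → ℝ) 1, 0 < u ⬝ᵥ (W t *ᵥ u) := fun hpos =>
      ((forall_mem_sphere_dotProduct_mulVec_pos_iff _).1 hpos v hv).not_ge hWv
    push Not at this
    exact ⟨t, ht, this⟩
  obtain ⟨t₀, ht₀, ⟨u, hu, hWu⟩, hbefore⟩ :=
    (isCompact_sphere (0 : ι → ℝ) 1).exists_first_nonpos (f := fun t u => u ⬝ᵥ (W t *ᵥ u))
      (fun p hp => (((hW p.1 hp.1).comp continuousAt_fst).dotProduct_mulVec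
        continuousAt_snd).continuousWithinAt) hsphere
  have hpos : ∀ τ ∈ Ico s t₀, ∀ w ≠ 0, 0 < w ⬝ᵥ (W τ *ᵥ w) := fun τ hτ =>
    (forall_mem_sphere_dotProduct_mulVec_pos_iff _).1 (hbefore τ hτ)
  have hu0 : u ≠ 0 := ne_zero_of_mem_unit_sphere ⟨u, hu⟩
  have hst₀ : s < t₀ := ht₀.1.lt_of_ne fun hst => hWu.not_gt (hst ▸ hs u hu0)
  have hWpsd : (W t₀).PosSemidef := by
    refine .of_dotProduct_mulVec_nonneg (isHermitian_iff_isSymm.2 (hsymm t₀ ht₀)) fun w => ?_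
    rw [star_trivial]
    rcases eq_or_ne w 0 with rfl | hw
    · simp
    have hcont : ContinuousAt (fun τ => w ⬝ᵥ (W τ *ᵥ w)) t₀ :=
      (hW t₀ ht₀).dotProduct_mulVec continuousAt_const
    refine ge_of_tendsto (hcont.tendsto.mono_left (nhdsWithin_le_nhds (s := Iio t₀))) ?_
    filter_upwards [Ico_mem_nhdsLT hst₀] with τ hτ using (hpos τ hτ w hw).le
  have hWu0 : W t₀ *ᵥ u = 0 := by
    have hker := hWpsd.dotProduct_mulVec_zero_iff u
    rw [star_trivial] at hker
    exact hker.1 (le_antisymm hWu (by simpa using hWpsd.dotProduct_mulVec_nonneg u))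
  exact ⟨t₀, ⟨hst₀, ht₀.2⟩, u, hu0, hWpsd, hWu0, fun τ hτ => hpos τ hτ u hu0⟩

/-- Cross-positivity (Schneider–Vidyasagar) with respect to the cone of positive semidefinite
matrices: the condition under which the flow of `Ẇ = L W` cannot leave that cone. -/
def IsCrossPositive (L : Matrix ι ι ℝ →ₗ[ℝ] Matrix ι ι ℝ) : Prop :=
  ∀ W : Matrix ι ι ℝ, W.PosSemidef → ∀ v, W *ᵥ v = 0 → 0 ≤ v ⬝ᵥ (L W *ᵥ v)

theorem IsCrossPositive.add {L M : Matrix ι ι ℝ →ₗ[ℝ] Matrix ι ι ℝ} (hL : IsCrossPositive L)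
    (hM : IsCrossPositive M) : IsCrossPositive (L + M) := fun W hW v hv => by
  simpa [add_mulVec, dotProduct_add] using add_nonneg (hL W hW v hv) (hM W hW v hv)

theorem IsCrossPositive.of_posSemidef {L : Matrix ι ι ℝ →ₗ[ℝ] Matrix ι ι ℝ}
    (hL : ∀ W, W.PosSemidef → (L W).PosSemidef) : IsCrossPositive L := fun W hW v _ => by
  simpa using (hL W hW).dotProduct_mulVec_nonneg v

theorem isCrossPositive_smul_id (c : ℝ) :
    IsCrossPositive (c • LinearMap.id : Matrix ι ι ℝ →ₗ[ℝ] Matrix ι ι ℝ) :=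
  fun W _ v hv => by simp [smul_mulVec, hv]

variable [DecidableEq ι]

theorem isCrossPositive_mulLeft_add_mulRight_transpose (A : Matrix ι ι ℝ) :
    IsCrossPositive (LinearMap.mulLeft ℝ A + LinearMap.mulRight ℝ Aᵀ) := fun W hW v hv => by
  have hWv : v ᵥ* W = 0 := by
    rw [← mulVec_transpose, (isHermitian_iff_isSymm.1 hW.1).eq, hv]
  simp [add_mulVec, ← mulVec_mulVec, hv, dotProduct_mulVec v W, hWv]

theorem IsCrossPositive.le_dotProduct_mulVec_sub_smul_one {L : Matrix ι ι ℝ →ₗ[ℝ] Matrix ι ι ℝ}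
    (hL : IsCrossPositive L) {κ : ℝ} (hκ : ∀ v, v ⬝ᵥ (L 1 *ᵥ v) ≤ κ * (v ⬝ᵥ v)) {φ : ℝ}
    (hφ : 0 ≤ φ) {W : Matrix ι ι ℝ} (hW : W.PosSemidef) {v : ι → ℝ} (hWv : W *ᵥ v = 0) :
    -(φ * κ * (v ⬝ᵥ v)) ≤ v ⬝ᵥ (L (W - φ • 1) *ᵥ v) := by
  rw [map_sub, map_smul, sub_mulVec, dotProduct_sub, smul_mulVec, dotProduct_smul, smul_eq_mul]
  nlinarith [hL W hW v hWv, mul_le_mul_of_nonneg_left (hκ v) hφ]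

section Comparison

variable {L : ℝ → Matrix ι ι ℝ →ₗ[ℝ] Matrix ι ι ℝ} {s T κ : ℝ} {D D' : ℝ → Matrix ι ι ℝ}

theorem dotProduct_mulVec_add_exp_smul_one_pos (hL : ∀ t ∈ Icc s T, IsCrossPositive (L t))
    (hκ : ∀ t ∈ Icc s T, ∀ v, v ⬝ᵥ (L t 1 *ᵥ v) ≤ κ * (v ⬝ᵥ v))
    (hsymm : ∀ t ∈ Icc s T, (D t).IsSymm) (hD : ∀ t ∈ Icc s T, HasDerivAt D (D' t) t)
    (hineq : ∀ t ∈ Icc s T, (D' t - L t (D t)).PosSemidef) (hs : (D s).PosSemidef)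
    {ε : ℝ} (hε : 0 < ε) :
    ∀ t ∈ Icc s T, ∀ v ≠ 0, 0 < v ⬝ᵥ ((D t + (ε * Real.exp ((κ + 1) * (t - s))) • 1) *ᵥ v) := by
  set φ : ℝ → ℝ := fun t => ε * Real.exp ((κ + 1) * (t - s))
  set W : ℝ → Matrix ι ι ℝ := fun t => D t + φ t • 1
  have hφ : ∀ t, 0 < φ t := fun t => mul_pos hε (Real.exp_pos _)
  have hW : ∀ t ∈ Icc s T, HasDerivAt W (D' t + ((κ + 1) * φ t) • 1) t := fun t ht => by
    have hφ' : HasDerivAt φ ((κ + 1) * φ t) t := by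
      simpa [φ, mul_comm, mul_left_comm] using
        (((hasDerivAt_id t).sub_const s).const_mul (κ + 1)).exp.const_mul ε
    exact (hD t ht).add (hφ'.smul_const 1)
  have hWs : ∀ v ≠ 0, 0 < v ⬝ᵥ (W s *ᵥ v) := fun v hv => by
    have hDs := hs.dotProduct_mulVec_nonneg v
    rw [star_trivial] at hDs
    simp only [W, add_mulVec, dotProduct_add, smul_mulVec, one_mulVec, dotProduct_smul,
      smul_eq_mul]
    nlinarith [hφ s, dotProduct_self_pos hv]
  by_contra! hneg
  obtain ⟨t₀, ht₀, u, hu0, hWpsd, hWu0, hbefore⟩ := exists_first_singular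
    (fun t ht => (hW t ht).continuousAt) (fun t ht => (hsymm t ht).add (isSymm_one.smul _))
    hWs hneg
  have ht₀' : t₀ ∈ Icc s T := Ioc_subset_Icc_self ht₀
  have hderiv : u ⬝ᵥ ((D' t₀ + ((κ + 1) * φ t₀) • 1) *ᵥ u) ≤ 0 := by
    refine HasDerivAt.nonpos_of_forall_Ico_le ht₀.1 ((hW t₀ ht₀').dotProduct_mulVec u)
      fun τ hτ => ?_
    rw [hWu0, dotProduct_zero]
    exact (hbefore τ hτ).le
  have hcross := (hL t₀ ht₀').le_dotProduct_mulVec_sub_smul_one (hκ t₀ ht₀') (hφ t₀).le hWpsd hWu0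
  have hDu := (hineq t₀ ht₀').dotProduct_mulVec_nonneg u
  simp only [W, add_sub_cancel_right, star_trivial, sub_mulVec, dotProduct_sub] at hcross hDu
  simp only [add_mulVec, dotProduct_add, smul_mulVec, one_mulVec, dotProduct_smul,
    smul_eq_mul] at hderiv
  nlinarith [hφ t₀, dotProduct_self_pos hu0]

theorem posSemidef_of_isCrossPositive (hsT : s ≤ T) (hL : ∀ t ∈ Icc s T, IsCrossPositive (L t))
    (hκ : ∀ t ∈ Icc s T, ∀ v, v ⬝ᵥ (L t 1 *ᵥ v) ≤ κ * (v ⬝ᵥ v))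
    (hsymm : ∀ t ∈ Icc s T, (D t).IsSymm) (hD : ∀ t ∈ Icc s T, HasDerivAt D (D' t) t)
    (hineq : ∀ t ∈ Icc s T, (D' t - L t (D t)).PosSemidef) (hs : (D s).PosSemidef) :
    (D T).PosSemidef := by
  refine .of_dotProduct_mulVec_nonneg (isHermitian_iff_isSymm.2 (hsymm T ⟨hsT, le_rfl⟩))
    fun v => ?_
  rw [star_trivial]
  rcases eq_or_ne v 0 with rfl | hv
  · simp
  refine le_of_forall_pos_lt_add fun δ hδ => ?_
  have hE : 0 < Real.exp ((κ + 1) * (T - s)) * (v ⬝ᵥ v) :=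
    mul_pos (Real.exp_pos _) (dotProduct_self_pos hv)
  have := dotProduct_mulVec_add_exp_smul_one_pos hL hκ hsymm hD hineq hs (div_pos hδ hE)
    T ⟨hsT, le_rfl⟩ v hv
  rwa [add_mulVec, dotProduct_add, smul_mulVec, one_mulVec, dotProduct_smul, smul_eq_mul,
    mul_assoc, div_mul_cancel₀ _ hE.ne'] at this

end Comparison

variable [Fintype ν]

def lyapunovMap (A : Matrix ι ι ℝ) (N : ν → Matrix ι ι ℝ) (c : ℝ) :
    Matrix ι ι ℝ →ₗ[ℝ] Matrix ι ι ℝ :=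
  LinearMap.mulLeft ℝ A + LinearMap.mulRight ℝ Aᵀ +
    ∑ k, LinearMap.mulLeft ℝ (N k) ∘ₗ LinearMap.mulRight ℝ (N k)ᵀ + c • LinearMap.id

variable (A : Matrix ι ι ℝ) (N : ν → Matrix ι ι ℝ) (c : ℝ)

@[simp]
theorem lyapunovMap_apply (D : Matrix ι ι ℝ) :
    lyapunovMap A N c D = A * D + D * Aᵀ + (∑ k, N k * D * (N k)ᵀ) + c • D := by
  simp [lyapunovMap, Matrix.mul_assoc]

theorem transpose_lyapunovMap (D : Matrix ι ι ℝ) :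
    (lyapunovMap A N c D)ᵀ = lyapunovMap A N c Dᵀ := by
  simp only [lyapunovMap_apply, Matrix.mul_assoc, transpose_add, transpose_mul,
    transpose_transpose, transpose_sum, transpose_smul, add_left_inj]
  abel

theorem lyapunovMap_eq_add_smul_id : lyapunovMap A N c = lyapunovMap A N 0 + c • LinearMap.id := by
  ext1 D
  simp

theorem isCrossPositive_lyapunovMap : IsCrossPositive (lyapunovMap A N c) := by
  refine ((isCrossPositive_mulLeft_add_mulRight_transpose A).add
    (IsCrossPositive.of_posSemidef fun W hW => ?_)).add (isCrossPositive_smul_id c)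
  simpa [conjTranspose_eq_transpose_of_trivial, Matrix.mul_assoc] using
    posSemidef_sum Finset.univ fun k _ => hW.mul_mul_conjTranspose_same (N k)

theorem exists_lipschitzWith_lyapunovMap :
    ∃ K, ∀ c, LipschitzWith (K + ‖c‖₊) (lyapunovMap A N c) := by
  obtain ⟨K, hK⟩ := (lyapunovMap A N 0).toAffineMap.lipschitzWith_of_finiteDimensional
  exact ⟨K, fun c => lyapunovMap_eq_add_smul_id A N c ▸ hK.add (lipschitzWith_smul c)⟩

theorem dotProduct_lyapunovMap_one_le {C : ℝ} (hc : c ≤ C) (v : ι → ℝ) :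
    v ⬝ᵥ (lyapunovMap A N c 1 *ᵥ v) ≤ (∑ i, ∑ j, |lyapunovMap A N 0 1 i j| + C) * (v ⬝ᵥ v) := by
  rw [lyapunovMap_eq_add_smul_id]
  simp only [LinearMap.add_apply, LinearMap.smul_apply, LinearMap.id_apply, add_mulVec,
    dotProduct_add, smul_mulVec, one_mulVec, dotProduct_smul, smul_eq_mul]
  nlinarith [dotProduct_mulVec_le_sum_abs (lyapunovMap A N 0 1) v,
    mul_le_mul_of_nonneg_right hc (by simpa using dotProduct_star_self_nonneg v : 0 ≤ v ⬝ᵥ v)]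

end Matrix

theorem matrix_gronwall_lemma_general
    {n m : ℕ}
    (A : Matrix (Fin n) (Fin n) ℝ) (N : Fin m → Matrix (Fin n) (Fin n) ℝ)
    (s : ℝ) (u : ℝ → Fin m → ℝ) (hu : Continuous u)
    (u0 : ℝ → Fin m → ℝ) (hu0 : ∀ t k, u0 t k = if N k = 0 then 0 else u t k)
    (X X' Z : ℝ → Matrix (Fin n) (Fin n) ℝ)
    -- X is a continuously differentiable symmetric-matrix-valued function
    (hXsymm : ∀ t ∈ Set.Ici s, (X t).IsSymm)
    (hX' : ∀ t ∈ Set.Ici s, ∀ i j, HasDerivAt (fun τ => X τ i j) (X' t i j) t)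
    -- the matrix differential inequality for X
    (hXineq : ∀ t ∈ Set.Ici s,
      (A * X t + X t * Aᵀ + (∑ k, N k * X t * (N k)ᵀ) + (∑ k, (u0 t k) ^ 2) • X t
        - X' t).PosSemidef)
    -- Z solves the matrix differential equation
    (hZ : ∀ t ∈ Set.Ici s, ∀ i j, HasDerivAt (fun τ => Z τ i j)
      ((A * Z t + Z t * Aᵀ + (∑ k, N k * Z t * (N k)ᵀ) + (∑ k, (u0 t k) ^ 2) • Z t) i j) t)
    -- X(s) ≼ Z(s)
    (hinit : (Z s - X s).PosSemidef) :
    ∀ t ∈ Set.Ici s, (Z t - X t).PosSemidef := by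
  intro T hT
  set c : ℝ → ℝ := fun t => ∑ k, u0 t k ^ 2
  have hc : Continuous c := continuous_finsetSum _ fun k _ => by
    by_cases hk : N k = 0
    · simpa [hu0, hk] using continuous_const
    · simp only [hu0, hk, if_false]
      exact ((continuous_apply k).comp hu).pow 2
  obtain ⟨C, hC⟩ := (isCompact_Icc (a := s) (b := T)).bddAbove_image hc.nnnorm.continuousOn
  have hcC : ∀ t ∈ Icc s T, ‖c t‖₊ ≤ C := fun t ht => hC ⟨t, ht, rfl⟩
  have hZ' : ∀ t ∈ Icc s T, HasDerivAt Z (lyapunovMap A N (c t) (Z t)) t := fun t ht =>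
    hasDerivAt_matrix_iff.2 (by simpa using hZ t ht.1)
  have hZs : (Z s).IsSymm :=
    sub_add_cancel (Z s) (X s) ▸ (isHermitian_iff_isSymm.1 hinit.1).add (hXsymm s self_mem_Ici)
  obtain ⟨K, hK⟩ := exists_lipschitzWith_lyapunovMap A N
  have hZsymm : ∀ t ∈ Icc s T, (Z t).IsSymm :=
    isSymm_of_hasDerivAt (fun t => transpose_lyapunovMap A N (c t))
      (fun t ht => (hK (c t)).weaken (add_le_add le_rfl (hcC t (Ico_subset_Icc_self ht)))) hZ' hZs
  refine posSemidef_of_isCrossPositive hT (fun t _ => isCrossPositive_lyapunovMap A N (c t))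
    (fun t ht => dotProduct_lyapunovMap_one_le A N (c t) ((le_abs_self _).trans (hcC t ht)))
    (fun t ht => (hZsymm t ht).sub (hXsymm t ht.1))
    (fun t ht => (hZ' t ht).sub (hasDerivAt_matrix_iff.2 (hX' t ht.1))) (fun t ht => ?_) hinit
  convert hXineq t ht.1 using 1
  simp only [lyapunovMap_apply, map_sub, sub_sub_sub_cancel_left, sub_left_inj, add_right_inj]
  abel

/-- **Gronwall lemma for matrix differential equations.**
If `X` satisfies the matrix differential inequality
`Ẋ(t) ≼ A X(t) + X(t) Aᵀ + Σ_k N_k X(t) N_kᵀ + ‖u⁰(t)‖₂² X(t)` on `[s,∞)`,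
`Z` solves the corresponding matrix differential equation, and `X(s) ≼ Z(s)`,
then `X(t) ≼ Z(t)` for all `t ≥ s`. -/
theorem matrix_gronwall_lemma
    {n m : ℕ}
    (A : Matrix (Fin n) (Fin n) ℝ) (N : Fin m → Matrix (Fin n) (Fin n) ℝ)
    (s : ℝ) (hs : 0 ≤ s) (u : ℝ → Fin m → ℝ) (hu : Continuous u)
    (u0 : ℝ → Fin m → ℝ) (hu0 : ∀ t k, u0 t k = if N k = 0 then 0 else u t k)
    (X X' Z : ℝ → Matrix (Fin n) (Fin n) ℝ)
    -- X is a continuously differentiable symmetric-matrix-valued function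
    (hXsymm : ∀ t ∈ Set.Ici s, (X t).IsSymm)
    (hX' : ∀ t ∈ Set.Ici s, ∀ i j, HasDerivAt (fun τ => X τ i j) (X' t i j) t)
    (hX'cont : ∀ i j, ContinuousOn (fun t => X' t i j) (Set.Ici s))
    -- the matrix differential inequality for X
    (hXineq : ∀ t ∈ Set.Ici s,
      (A * X t + X t * Aᵀ + (∑ k, N k * X t * (N k)ᵀ) + (∑ k, (u0 t k) ^ 2) • X t
        - X' t).PosSemidef)
    -- Z solves the matrix differential equation
    (hZ : ∀ t ∈ Set.Ici s, ∀ i j, HasDerivAt (fun τ => Z τ i j)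
      ((A * Z t + Z t * Aᵀ + (∑ k, N k * Z t * (N k)ᵀ) + (∑ k, (u0 t k) ^ 2) • Z t) i j) t)
    -- X(s) ≼ Z(s)
    (hinit : (Z s - X s).PosSemidef) :
    ∀ t ∈ Set.Ici s, (Z t - X t).PosSemidef :=
  matrix_gronwall_lemma_general A N s u hu u0 hu0 X X' Z hXsymm hX' hXineq hZ hinit
end

section
/- Let Y be a positive semidefinite matrix in ℝ^{n×n}, v₀ ∈ ℝ^n a vector with v₀^T Y v₀ = 0, and c ∈ ℝ with c ≥ 0. Then v₀^T (A Y + Y A^T + Σ_{k=1}^m N_k Y N_k^T + c Y) v₀ ≥ 0 for any matrices A, N_k ∈ ℝ^{n×n}. -/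
open Matrix

/-!
Since `Y` is positive semidefinite, `v₀ᵀ Y v₀ = 0` forces `Y v₀ = 0`, and by symmetry `v₀ᵀ Y = 0`.
Hence the terms `A Y`, `Y Aᵀ` and `c Y` contribute nothing to the quadratic form at `v₀`, while
`Σ_k N_k Y N_kᵀ` is positive semidefinite as a sum of congruences of `Y`.
-/

namespace Matrix

variable {n R : Type*} [Fintype n] [CommSemiring R]

theorem dotProduct_mul_mulVec_eq_zero_of_mulVec_eq_zero {Y : Matrix n n R} {v : n → R}
    (hv : Y *ᵥ v = 0) (A : Matrix n n R) : v ⬝ᵥ (A * Y) *ᵥ v = 0 := by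
  rw [← mulVec_mulVec, hv, mulVec_zero, dotProduct_zero]

theorem dotProduct_mul_mulVec_eq_zero_of_vecMul_eq_zero {Y : Matrix n n R} {v : n → R}
    (hv : v ᵥ* Y = 0) (B : Matrix n n R) : v ⬝ᵥ (Y * B) *ᵥ v = 0 := by
  rw [dotProduct_mulVec, ← vecMul_vecMul, hv, zero_vecMul, zero_dotProduct]

end Matrix

theorem lyapunov_operator_resolvent_positive_general
    {n m : ℕ}
    (A : Matrix (Fin n) (Fin n) ℝ) (N : Fin m → Matrix (Fin n) (Fin n) ℝ)
    (Y : Matrix (Fin n) (Fin n) ℝ) (hY : Y.PosSemidef)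
    (v0 : Fin n → ℝ) (hv0 : v0 ⬝ᵥ Y.mulVec v0 = 0)
    (c : ℝ) :
    0 ≤ v0 ⬝ᵥ (A * Y + Y * Aᵀ + (∑ k, N k * Y * (N k)ᵀ) + c • Y).mulVec v0 := by
  have hYv : Y *ᵥ v0 = 0 := (hY.dotProduct_mulVec_zero_iff v0).mp (by simpa using hv0)
  have hvY : v0 ᵥ* Y = 0 := by
    rw [← mulVec_transpose, ← conjTranspose_eq_transpose_of_trivial, hY.isHermitian.eq, hYv]
  have hNYN : (∑ k, N k * Y * (N k)ᵀ).PosSemidef :=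
    posSemidef_sum _ fun k _ => hY.mul_mul_conjTranspose_same (N k)
  simp only [add_mulVec, dotProduct_add, smul_mulVec, dotProduct_smul, hv0, smul_zero,
    dotProduct_mul_mulVec_eq_zero_of_mulVec_eq_zero hYv,
    dotProduct_mul_mulVec_eq_zero_of_vecMul_eq_zero hvY, zero_add, add_zero]
  simpa using hNYN.dotProduct_mulVec_nonneg v0

/-- Resolvent positivity of the generalized Lyapunov operator:
if `Y ≽ 0`, `v₀ᵀ Y v₀ = 0` and `c ≥ 0`, then
`v₀ᵀ (A Y + Y Aᵀ + Σ_k N_k Y N_kᵀ + c Y) v₀ ≥ 0`. -/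
theorem lyapunov_operator_resolvent_positive
    {n m : ℕ}
    (A : Matrix (Fin n) (Fin n) ℝ) (N : Fin m → Matrix (Fin n) (Fin n) ℝ)
    (Y : Matrix (Fin n) (Fin n) ℝ) (hY : Y.PosSemidef)
    (v0 : Fin n → ℝ) (hv0 : v0 ⬝ᵥ Y.mulVec v0 = 0)
    (c : ℝ) (hc : 0 ≤ c) :
    0 ≤ v0 ⬝ᵥ (A * Y + Y * Aᵀ + (∑ k, N k * Y * (N k)ᵀ) + c • Y).mulVec v0 :=
  lyapunov_operator_resolvent_positive_general A N Y hY v0 hv0 c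
end

section
/- Let x solve the bilinear state equation ẋ(t) = A x(t) + B u(t) + Σ_{k=1}^m N_k x(t) u_k(t) with x(0) = 0, suppose σ(A⊗I + I⊗A + Σ_{k=1}^m N_k⊗N_k) ⊂ ℂ₋, let P solve A P + P A^T + Σ_{k=1}^m N_k P N_k^T = −B B^T, and let (v_k)_{k=1,…,n} be an orthonormal basis of eigenvectors of P with corresponding eigenvalues (λ_k)_{k=1,…,n}. Then for each k, sup_{t≥0} |⟨x(t), v_k⟩| ≤ λ_k^{1/2} · exp(0.5 ‖u⁰‖²_{L²}) · ‖u‖_{L²}. -/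
open Matrix MeasureTheory
open scoped Kronecker Classical

/-
Stability of `K = A ⊗ I + I ⊗ A + ∑ N_k ⊗ N_k` makes the generalized Lyapunov operator
`L X = A X + X Aᵀ + ∑ N_k X N_kᵀ` (whose matrix on `vec X` is `K`) invertible, and every solution
of `L X = -C` with `C` positive definite is positive definite: along the homotopy
`(1 - σ) X - σ L X = C`, `σ ∈ [0, 1]`, the solutions are symmetric, positive definiteness is an
open condition, and a positive semidefinite solution is automatically definite, so definiteness
persists from `X = C` at `σ = 0` to `σ = 1`. Hence `P_ε = P + ε R` with `L R = -I` is positive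
definite and `L P_ε + B Bᵀ = -ε I`.

Along a trajectory, `W = xᵀ P_ε⁻¹ x` satisfies `Ẇ ≤ ‖u‖² + ‖u⁰‖² W` after completing squares, so
Gronwall gives `W(t) ≤ exp ‖u⁰‖²_{L²} · ‖u‖²_{L²}`. Cauchy–Schwarz for the form of `P_ε⁻¹` gives
`⟨x, v⟩² ≤ W · vᵀ P_ε v = W (λ + ε vᵀ R v)`, and letting `ε → 0` yields the estimate and `λ ≥ 0`.
-/

namespace Matrix

variable {ι : Type*} [Fintype ι]

theorem IsHermitian.dotProduct_mulVec_comm {M : Matrix ι ι ℝ} (hM : M.IsHermitian)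
    (a b : ι → ℝ) : a ⬝ᵥ M *ᵥ b = b ⬝ᵥ M *ᵥ a := by
  rw [dotProduct_mulVec, ← mulVec_transpose, (isHermitian_iff_isSymm.1 hM).eq, dotProduct_comm]

theorem IsHermitian.dotProduct_mulVec_add_smul {M : Matrix ι ι ℝ} (hM : M.IsHermitian)
    (a b : ι → ℝ) (c : ℝ) :
    (a + c • b) ⬝ᵥ M *ᵥ (a + c • b)
      = a ⬝ᵥ M *ᵥ a + 2 * c * (a ⬝ᵥ M *ᵥ b) + c ^ 2 * (b ⬝ᵥ M *ᵥ b) := by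
  simp only [mulVec_add, mulVec_smul, add_dotProduct, dotProduct_add, smul_dotProduct,
    dotProduct_smul, smul_eq_mul, hM.dotProduct_mulVec_comm b a]
  ring

theorem PosSemidef.two_mul_dotProduct_mulVec_le {M : Matrix ι ι ℝ} (hM : M.PosSemidef)
    (a b : ι → ℝ) : 2 * (a ⬝ᵥ M *ᵥ b) ≤ a ⬝ᵥ M *ᵥ a + b ⬝ᵥ M *ᵥ b := by
  have h := hM.dotProduct_mulVec_nonneg (a + (-1 : ℝ) • b)
  rw [star_trivial, hM.1.dotProduct_mulVec_add_smul] at h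
  linarith

theorem PosSemidef.sq_dotProduct_mulVec_le {M : Matrix ι ι ℝ} (hM : M.PosSemidef)
    (a b : ι → ℝ) : (a ⬝ᵥ M *ᵥ b) ^ 2 ≤ (a ⬝ᵥ M *ᵥ a) * (b ⬝ᵥ M *ᵥ b) := by
  have h := discrim_le_zero (a := b ⬝ᵥ M *ᵥ b) (b := 2 * (a ⬝ᵥ M *ᵥ b)) (c := a ⬝ᵥ M *ᵥ a)
    fun c => by
      have := hM.dotProduct_mulVec_nonneg (a + c • b)
      rw [star_trivial, hM.1.dotProduct_mulVec_add_smul] at this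
      linarith
  rw [discrim] at h
  linarith

theorem PosDef.sq_dotProduct_le [DecidableEq ι] {P : Matrix ι ι ℝ} (hP : P.PosDef)
    (x v : ι → ℝ) : (x ⬝ᵥ v) ^ 2 ≤ (x ⬝ᵥ P⁻¹ *ᵥ x) * (v ⬝ᵥ P *ᵥ v) := by
  have hPP : P⁻¹ *ᵥ (P *ᵥ v) = v := by
    rw [mulVec_mulVec, nonsing_inv_mul _ ((isUnit_iff_isUnit_det _).1 hP.isUnit), one_mulVec]
  simpa only [hPP, dotProduct_comm (P *ᵥ v)] using
    hP.inv.posSemidef.sq_dotProduct_mulVec_le x (P *ᵥ v)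

theorem isOpen_setOf_forall_dotProduct_mulVec_pos :
    IsOpen {M : Matrix ι ι ℝ | ∀ w ≠ 0, 0 < w ⬝ᵥ M *ᵥ w} := by
  refine isOpen_iff_mem_nhds.2 fun M₀ hM₀ => ?_
  have hsphere : ∀ᶠ M in nhds M₀, ∀ w ∈ Metric.sphere (0 : ι → ℝ) 1, 0 < w ⬝ᵥ M *ᵥ w := by
    refine (isCompact_sphere 0 1).eventually_forall_of_forall_eventually fun w hw => ?_
    have hcont : Continuous fun p : Matrix ι ι ℝ × (ι → ℝ) => p.2 ⬝ᵥ p.1 *ᵥ p.2 := by fun_prop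
    exact (hcont.tendsto (M₀, w)).eventually
      (lt_mem_nhds (hM₀ w (ne_zero_of_mem_unit_sphere ⟨w, hw⟩)))
  filter_upwards [hsphere] with M hM w hw
  have hw' : ‖w‖⁻¹ • w ∈ Metric.sphere (0 : ι → ℝ) 1 := by
    simp [norm_smul, hw]
  have := hM _ hw'
  simp only [mulVec_smul, smul_dotProduct, dotProduct_smul, smul_eq_mul] at this
  have hn : 0 < ‖w‖⁻¹ := by positivity
  nlinarith [mul_pos hn hn]

theorem isClosed_setOf_forall_dotProduct_mulVec_nonneg :
    IsClosed {M : Matrix ι ι ℝ | ∀ w, 0 ≤ w ⬝ᵥ M *ᵥ w} := by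
  simp only [Set.ofPred_forall]
  exact isClosed_iInter fun w => isClosed_le continuous_const (by fun_prop)

theorem posDef_of_continuous_of_posSemidef_imp_posDef {T : Type*} [TopologicalSpace T]
    [PreconnectedSpace T] {X : T → Matrix ι ι ℝ} (hX : Continuous X)
    (hherm : ∀ t, (X t).IsHermitian) (hpsd : ∀ t, (X t).PosSemidef → (X t).PosDef)
    {t₀ : T} (h₀ : (X t₀).PosDef) (t : T) : (X t).PosDef := by
  have hpos : {t | (X t).PosDef} = X ⁻¹' {M | ∀ w ≠ 0, 0 < w ⬝ᵥ M *ᵥ w} := by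
    ext t
    simp only [Set.mem_ofPred_eq, Set.mem_preimage, posDef_iff_dotProduct_mulVec, star_trivial,
      hherm t, true_and]
  have hnonneg : {t | (X t).PosDef} = X ⁻¹' {M | ∀ w, 0 ≤ w ⬝ᵥ M *ᵥ w} := by
    ext t
    refine ⟨fun h w => by simpa using h.posSemidef.dotProduct_mulVec_nonneg w, fun h => hpsd t ?_⟩
    exact .of_dotProduct_mulVec_nonneg (hherm t) (by simpa using h)
  have hclopen : IsClopen {t | (X t).PosDef} :=
    ⟨hnonneg ▸ isClosed_setOf_forall_dotProduct_mulVec_nonneg.preimage hX,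
      hpos ▸ isOpen_setOf_forall_dotProduct_mulVec_pos.preimage hX⟩
  exact Set.eq_univ_iff_forall.1 (hclopen.eq_univ ⟨t₀, h₀⟩) t

def IsHurwitz [DecidableEq ι] (K : Matrix ι ι ℝ) : Prop :=
  ∀ z ∈ spectrum ℂ (K.map Complex.ofReal), z.re < 0

theorem IsHurwitz.isUnit_smul_one_sub [DecidableEq ι] {K : Matrix ι ι ℝ} (hK : K.IsHurwitz)
    {s : ℝ} (hs : 0 ≤ s) : IsUnit (s • 1 - K) := by
  by_contra h
  have hmem : (s : ℂ) ∈ spectrum ℂ (K.map Complex.ofReal) := by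
    have hmap : (s : ℂ) • (1 : Matrix ι ι ℂ) - K.map Complex.ofReal
        = Complex.ofRealHom.mapMatrix (s • 1 - K) := by
      ext i j
      by_cases hij : i = j <;> simp [hij]
    rw [spectrum.mem_iff, Algebra.algebraMap_eq_smul_one, hmap, isUnit_iff_isUnit_det,
      ← RingHom.map_det, isUnit_iff_ne_zero, Complex.ofRealHom_eq_coe, Complex.ofReal_ne_zero,
      ← isUnit_iff_ne_zero, ← isUnit_iff_isUnit_det]
    exact h
  exact (hs.trans_lt (by simpa using hK _ hmem)).false

end Matrix

section Lyapunov

variable {ι κ : Type*} [Fintype ι] [Fintype κ]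

def lyapunovOp (A : Matrix ι ι ℝ) (N : κ → Matrix ι ι ℝ) :
    Matrix ι ι ℝ →ₗ[ℝ] Matrix ι ι ℝ where
  toFun X := A * X + X * Aᵀ + ∑ k, N k * X * (N k)ᵀ
  map_add' X Y := by
    simp only [Matrix.mul_add, Matrix.add_mul, Finset.sum_add_distrib]
    abel
  map_smul' c X := by simp [Finset.smul_sum]

def lyapunovHomotopy (A : Matrix ι ι ℝ) (N : κ → Matrix ι ι ℝ) (σ : ℝ) :
    Matrix ι ι ℝ →ₗ[ℝ] Matrix ι ι ℝ :=
  (1 - σ) • LinearMap.id - σ • lyapunovOp A N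

variable {A : Matrix ι ι ℝ} {N : κ → Matrix ι ι ℝ}

theorem lyapunovOp_apply (X : Matrix ι ι ℝ) :
    lyapunovOp A N X = A * X + X * Aᵀ + ∑ k, N k * X * (N k)ᵀ := rfl

theorem lyapunovOp_transpose (X : Matrix ι ι ℝ) :
    (lyapunovOp A N X)ᵀ = lyapunovOp A N Xᵀ := by
  simp only [lyapunovOp_apply, transpose_add, transpose_sum, transpose_mul, transpose_transpose,
    Matrix.mul_assoc]
  abel

theorem dotProduct_lyapunovOp_mulVec {X : Matrix ι ι ℝ} (hX : X.IsHermitian) (w : ι → ℝ) :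
    w ⬝ᵥ lyapunovOp A N X *ᵥ w
      = 2 * ((Aᵀ *ᵥ w) ⬝ᵥ X *ᵥ w) + ∑ k, ((N k)ᵀ *ᵥ w) ⬝ᵥ X *ᵥ ((N k)ᵀ *ᵥ w) := by
  simp only [lyapunovOp_apply, add_mulVec, sum_mulVec, dotProduct_add, dotProduct_sum,
    ← mulVec_mulVec, dotProduct_mulVec w, ← mulVec_transpose, (isHermitian_iff_isSymm.1 hX).eq,
    dotProduct_comm (X *ᵥ w)]
  ring

theorem lyapunovHomotopy_apply (σ : ℝ) (X : Matrix ι ι ℝ) :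
    lyapunovHomotopy A N σ X = (1 - σ) • X - σ • lyapunovOp A N X := rfl

theorem lyapunovHomotopy_zero_apply (X : Matrix ι ι ℝ) : lyapunovHomotopy A N 0 X = X := by
  simp [lyapunovHomotopy_apply]

theorem lyapunovHomotopy_one_apply (X : Matrix ι ι ℝ) :
    lyapunovHomotopy A N 1 X = -lyapunovOp A N X := by
  simp [lyapunovHomotopy_apply]

theorem lyapunovHomotopy_transpose (σ : ℝ) (X : Matrix ι ι ℝ) :
    (lyapunovHomotopy A N σ X)ᵀ = lyapunovHomotopy A N σ Xᵀ := by
  simp only [lyapunovHomotopy_apply, transpose_sub, transpose_smul, lyapunovOp_transpose]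

/-- If `X x = 0`, the terms `A X + X Aᵀ` drop out of `xᵀ (L X) x`, leaving `xᵀ C x ≤ 0`. -/
theorem posDef_of_lyapunovHomotopy_eq {σ : ℝ} (hσ : 0 ≤ σ) {C X : Matrix ι ι ℝ}
    (hC : C.PosDef) (hX : X.PosSemidef) (hXC : lyapunovHomotopy A N σ X = C) : X.PosDef := by
  refine .of_dotProduct_mulVec_pos hX.1 fun w hw => ?_
  refine (hX.dotProduct_mulVec_nonneg w).lt_of_ne' fun h0 => ?_
  have hXw : X *ᵥ w = 0 := (hX.dotProduct_mulVec_zero_iff w).1 h0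
  have hCw := hC.dotProduct_mulVec_pos hw
  rw [star_trivial] at h0 hCw
  rw [← hXC, lyapunovHomotopy_apply, sub_mulVec, smul_mulVec, smul_mulVec, dotProduct_sub,
    dotProduct_smul, dotProduct_smul, dotProduct_lyapunovOp_mulVec hX.1, h0, hXw] at hCw
  have := Finset.sum_nonneg fun k (_ : k ∈ Finset.univ) =>
    hX.dotProduct_mulVec_nonneg ((N k)ᵀ *ᵥ w)
  simp only [star_trivial, smul_eq_mul, dotProduct_zero] at hCw this
  nlinarith

variable [DecidableEq ι]

variable (A N) in
def lyapunovKron : Matrix (ι × ι) (ι × ι) ℝ :=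
  A ⊗ₖ 1 + 1 ⊗ₖ A + ∑ k, N k ⊗ₖ N k

variable (A N) in
/-- Solves `lyapunovHomotopy A N σ X = C` for `σ ∈ [0, 1]` by inverting the matrix of the homotopy
on `vec X` (recall `vec X (j, i) = X i j`). -/
noncomputable def lyapunovPath (C : Matrix ι ι ℝ) (σ : ℝ) : Matrix ι ι ℝ :=
  Matrix.of fun i j => (((1 - σ) • 1 - σ • lyapunovKron A N)⁻¹ *ᵥ vec C) (j, i)

theorem lyapunovKron_mulVec_vec (X : Matrix ι ι ℝ) :
    lyapunovKron A N *ᵥ vec X = vec (lyapunovOp A N X) := by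
  simp only [lyapunovKron, lyapunovOp_apply, add_mulVec, sum_mulVec, kronecker_mulVec_vec,
    vec_add, vec_sum, transpose_one, Matrix.mul_one, Matrix.one_mul]
  abel

theorem vec_lyapunovHomotopy (σ : ℝ) (X : Matrix ι ι ℝ) :
    vec (lyapunovHomotopy A N σ X) = ((1 - σ) • 1 - σ • lyapunovKron A N) *ᵥ vec X := by
  rw [lyapunovHomotopy_apply, sub_mulVec, smul_mulVec, smul_mulVec, one_mulVec,
    lyapunovKron_mulVec_vec, vec_sub, vec_smul, vec_smul]

section Stable

variable (hstab : (lyapunovKron A N).IsHurwitz)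
include hstab

theorem isUnit_lyapunovHomotopy_matrix {σ : ℝ} (hσ : σ ∈ Set.Icc (0 : ℝ) 1) :
    IsUnit ((1 - σ) • 1 - σ • lyapunovKron A N) := by
  rcases hσ.1.eq_or_lt with rfl | hσ₀
  · simp
  have hfactor : (1 - σ) • (1 : Matrix (ι × ι) (ι × ι) ℝ) - σ • lyapunovKron A N
      = σ • (((1 - σ) / σ) • 1 - lyapunovKron A N) := by
    rw [smul_sub, smul_smul, mul_div_cancel₀ _ hσ₀.ne']
  rw [hfactor, isUnit_iff_isUnit_det, det_smul]
  exact (hσ₀.ne'.isUnit.pow _).mul ((isUnit_iff_isUnit_det _).1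
    (hstab.isUnit_smul_one_sub (div_nonneg (sub_nonneg.2 hσ.2) hσ₀.le)))

theorem lyapunovHomotopy_injective {σ : ℝ} (hσ : σ ∈ Set.Icc (0 : ℝ) 1) :
    Function.Injective (lyapunovHomotopy A N σ) := by
  intro X Y h
  rw [← vec_inj]
  apply mulVec_injective_iff_isUnit.2 (isUnit_lyapunovHomotopy_matrix hstab hσ)
  simp only [← vec_lyapunovHomotopy, h]

theorem lyapunovHomotopy_lyapunovPath (C : Matrix ι ι ℝ) {σ : ℝ} (hσ : σ ∈ Set.Icc (0 : ℝ) 1) :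
    lyapunovHomotopy A N σ (lyapunovPath A N C σ) = C := by
  have hvec : vec (lyapunovPath A N C σ)
      = ((1 - σ) • 1 - σ • lyapunovKron A N)⁻¹ *ᵥ vec C := rfl
  rw [← vec_inj, vec_lyapunovHomotopy, hvec, mulVec_mulVec,
    mul_nonsing_inv _ ((isUnit_iff_isUnit_det _).1 (isUnit_lyapunovHomotopy_matrix hstab hσ)),
    one_mulVec]

theorem continuousOn_lyapunovPath (C : Matrix ι ι ℝ) :
    ContinuousOn (lyapunovPath A N C) (Set.Icc 0 1) := by
  intro σ hσ
  let T : ℝ → Matrix (ι × ι) (ι × ι) ℝ := fun τ => (1 - τ) • 1 - τ • lyapunovKron A N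
  have hT : Continuous T := by fun_prop
  have hinv : ContinuousAt Inv.inv (T σ) := by
    refine continuousAt_matrix_inv _ ?_
    rw [Ring.inverse_eq_inv']
    exact continuousAt_inv₀
      ((isUnit_iff_isUnit_det _).1 (isUnit_lyapunovHomotopy_matrix hstab hσ)).ne_zero
  have hunvec : Continuous fun M : Matrix (ι × ι) (ι × ι) ℝ =>
      Matrix.of fun i j => (M *ᵥ vec C) (j, i) := by
    fun_prop
  exact (hunvec.continuousAt.comp (hinv.comp (f := T) hT.continuousAt)).continuousWithinAt

theorem isHermitian_lyapunovPath {C : Matrix ι ι ℝ} (hC : C.IsHermitian) {σ : ℝ}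
    (hσ : σ ∈ Set.Icc (0 : ℝ) 1) : (lyapunovPath A N C σ).IsHermitian := by
  rw [isHermitian_iff_isSymm]
  refine lyapunovHomotopy_injective hstab hσ ?_
  rw [← lyapunovHomotopy_transpose, lyapunovHomotopy_lyapunovPath hstab C hσ,
    (isHermitian_iff_isSymm.1 hC).eq]

theorem posDef_lyapunovPath {C : Matrix ι ι ℝ} (hC : C.PosDef) {σ : ℝ}
    (hσ : σ ∈ Set.Icc (0 : ℝ) 1) : (lyapunovPath A N C σ).PosDef := by
  have h₀ : lyapunovPath A N C 0 = C := by
    simpa [lyapunovHomotopy_zero_apply] using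
      lyapunovHomotopy_lyapunovPath hstab C (σ := 0) ⟨le_rfl, zero_le_one⟩
  exact posDef_of_continuous_of_posSemidef_imp_posDef (T := Set.Icc (0 : ℝ) 1)
    (X := fun σ => lyapunovPath A N C σ) (continuousOn_lyapunovPath hstab C).domRestrict
    (fun σ => isHermitian_lyapunovPath hstab hC.1 σ.2)
    (fun σ h => posDef_of_lyapunovHomotopy_eq σ.2.1 hC h
      (lyapunovHomotopy_lyapunovPath hstab C σ.2))
    (t₀ := ⟨0, le_rfl, zero_le_one⟩) (by simpa only [h₀] using hC) ⟨σ, hσ⟩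

theorem lyapunovOp_injective : Function.Injective (lyapunovOp A N) := fun X Y h =>
  lyapunovHomotopy_injective hstab (σ := 1) ⟨zero_le_one, le_rfl⟩ (by
    simp only [lyapunovHomotopy_one_apply, h])

theorem lyapunovOp_surjective : Function.Surjective (lyapunovOp A N) :=
  LinearMap.injective_iff_surjective.1 (lyapunovOp_injective hstab)

theorem posDef_of_lyapunovOp_eq_neg {C X : Matrix ι ι ℝ} (hC : C.PosDef)
    (hX : lyapunovOp A N X = -C) : X.PosDef := by
  have h₁ : lyapunovOp A N (lyapunovPath A N C 1) = -C := by
    rw [← neg_neg (lyapunovOp A N _), ← lyapunovHomotopy_one_apply,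
      lyapunovHomotopy_lyapunovPath hstab C ⟨zero_le_one, le_rfl⟩]
  rw [lyapunovOp_injective hstab (hX.trans h₁.symm)]
  exact posDef_lyapunovPath hstab hC ⟨zero_le_one, le_rfl⟩

theorem exists_posDef_add_smul_of_lyapunovOp_eq {P : Matrix ι ι ℝ} {B : Matrix ι κ ℝ}
    (hP : lyapunovOp A N P = -(B * Bᵀ)) :
    ∃ R : Matrix ι ι ℝ, ∀ ε : ℝ, 0 < ε → (P + ε • R).PosDef ∧
      ∀ r, r ⬝ᵥ (lyapunovOp A N (P + ε • R) + B * Bᵀ) *ᵥ r ≤ 0 := by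
  obtain ⟨R, hR⟩ := lyapunovOp_surjective hstab (-1)
  refine ⟨R, fun ε hε => ?_⟩
  have hLε : lyapunovOp A N (P + ε • R) = -(B * Bᵀ + ε • 1) := by
    rw [map_add, map_smul, hR, hP, smul_neg, neg_add]
  refine ⟨posDef_of_lyapunovOp_eq_neg hstab (PosDef.posSemidef_add
    (by simpa using posSemidef_self_mul_conjTranspose B) (PosDef.one.smul hε)) hLε, fun r => ?_⟩
  rw [hLε, show -(B * Bᵀ + ε • 1) + B * Bᵀ = -(ε • 1) by abel, neg_mulVec, smul_mulVec,
    one_mulVec, dotProduct_neg, dotProduct_smul, smul_eq_mul, neg_nonpos]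
  exact mul_nonneg hε.le (by simpa using dotProduct_star_self_nonneg r)

end Stable

/-- Completing squares in the derivative of `xᵀ P⁻¹ x` along the bilinear system. -/
theorem two_mul_inv_mulVec_dotProduct_le {P : Matrix ι ι ℝ} {B : Matrix ι κ ℝ}
    (hP : P.PosDef) (hL : ∀ r, r ⬝ᵥ (lyapunovOp A N P + B * Bᵀ) *ᵥ r ≤ 0)
    (y : ι → ℝ) (w : κ → ℝ) :
    2 * (P⁻¹ *ᵥ y ⬝ᵥ (A *ᵥ y + B *ᵥ w + ∑ k, w k • N k *ᵥ y))
      ≤ ∑ k, w k ^ 2 + (∑ k, (if N k = 0 then 0 else w k) ^ 2) * (y ⬝ᵥ P⁻¹ *ᵥ y) := by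
  set r := P⁻¹ *ᵥ y
  have hy : y = P *ᵥ r := by
    rw [mulVec_mulVec, mul_nonsing_inv _ ((isUnit_iff_isUnit_det _).1 hP.isUnit), one_mulVec]
  have hLr := hL r
  rw [add_mulVec, dotProduct_add, dotProduct_lyapunovOp_mulVec hP.1, ← mulVec_mulVec,
    dotProduct_mulVec r B, ← mulVec_transpose] at hLr
  have hBw : 2 * ((Bᵀ *ᵥ r) ⬝ᵥ w) ≤ (Bᵀ *ᵥ r) ⬝ᵥ (Bᵀ *ᵥ r) + ∑ k, w k ^ 2 := by
    simp only [dotProduct, Finset.mul_sum, ← Finset.sum_add_distrib]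
    exact Finset.sum_le_sum fun k _ => by nlinarith [sq_nonneg ((Bᵀ *ᵥ r) k - w k)]
  have hNw : ∀ k, 2 * (w k * ((N k)ᵀ *ᵥ r ⬝ᵥ P *ᵥ r))
      ≤ (N k)ᵀ *ᵥ r ⬝ᵥ P *ᵥ ((N k)ᵀ *ᵥ r)
        + (if N k = 0 then 0 else w k) ^ 2 * (r ⬝ᵥ P *ᵥ r) := by
    intro k
    by_cases hk : N k = 0
    · simp [hk]
    · have := hP.posSemidef.two_mul_dotProduct_mulVec_le ((N k)ᵀ *ᵥ r) (w k • r)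
      simp only [mulVec_smul, dotProduct_smul, smul_dotProduct, smul_eq_mul] at this
      rw [if_neg hk]
      linarith
  have hsum := Finset.sum_le_sum fun k (_ : k ∈ Finset.univ) => hNw k
  rw [← Finset.mul_sum, Finset.sum_add_distrib, ← Finset.sum_mul] at hsum
  have hA : r ⬝ᵥ A *ᵥ y = Aᵀ *ᵥ r ⬝ᵥ P *ᵥ r := by
    rw [hy, dotProduct_mulVec r A, ← mulVec_transpose]
  have hB : r ⬝ᵥ B *ᵥ w = Bᵀ *ᵥ r ⬝ᵥ w := by
    rw [dotProduct_mulVec, ← mulVec_transpose]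
  have hN : ∀ k, r ⬝ᵥ w k • N k *ᵥ y = w k * ((N k)ᵀ *ᵥ r ⬝ᵥ P *ᵥ r) := fun k => by
    rw [dotProduct_smul, hy, dotProduct_mulVec r (N k), ← mulVec_transpose, smul_eq_mul]
  have hW : y ⬝ᵥ r = r ⬝ᵥ P *ᵥ r := by
    rw [dotProduct_comm, ← hy]
  rw [dotProduct_add, dotProduct_add, dotProduct_sum, hA, hB,
    Finset.sum_congr rfl fun k _ => hN k, hW]
  linarith

end Lyapunov

theorem le_of_forall_pos_le_add_mul {a b c : ℝ} (h : ∀ ε > 0, a ≤ b + ε * c) : a ≤ b := by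
  have hlim : Filter.Tendsto (fun ε => b + ε * c) (nhdsWithin 0 (Set.Ioi 0)) (nhds b) := by
    have : Continuous fun ε : ℝ => b + ε * c := by fun_prop
    simpa using (this.tendsto 0).mono_left nhdsWithin_le_nhds
  exact ge_of_tendsto hlim (eventually_nhdsWithin_of_forall h)

theorem intervalIntegral_le_integral_Ioi {f : ℝ → ℝ} (hf : IntegrableOn f (Set.Ioi 0))
    (hf₀ : ∀ s, 0 ≤ f s) {t : ℝ} (ht : 0 ≤ t) :
    ∫ s in 0..t, f s ≤ ∫ s in Set.Ioi 0, f s := by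
  rw [intervalIntegral.integral_of_le ht]
  exact setIntegral_mono_set hf (.of_forall hf₀) Set.Ioc_subset_Ioi_self.eventuallyLE

open Real Set in
theorem le_exp_integral_mul_of_hasDerivAt_le {W W' g h : ℝ → ℝ} (hg : Continuous g)
    (hh : Continuous h) (hg₀ : ∀ s, 0 ≤ g s) (hh₀ : ∀ s, 0 ≤ h s)
    (hW : ∀ t, 0 ≤ t → HasDerivAt W (W' t) t) (hW' : ∀ t, 0 ≤ t → W' t ≤ h t + g t * W t)
    {t : ℝ} (ht : 0 ≤ t) :
    W t ≤ exp (∫ s in 0..t, g s) * (W 0 + ∫ s in 0..t, h s) := by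
  set G := fun τ => ∫ s in 0..τ, g s
  set H := fun τ => ∫ s in 0..τ, h s
  have hΦ : ∀ τ, 0 ≤ τ → HasDerivAt (fun τ => exp (-G τ) * W τ - H τ)
      (exp (-G τ) * (W' τ - g τ * W τ) - h τ) τ := fun τ hτ => by
    refine ((((hg.integral_hasStrictDerivAt 0 τ).hasDerivAt.neg.exp).mul (hW τ hτ)).sub
      (hh.integral_hasStrictDerivAt 0 τ).hasDerivAt).congr_deriv ?_
    simp only [Pi.neg_apply]
    ring
  have hanti : AntitoneOn (fun τ => exp (-G τ) * W τ - H τ) (Ici 0) := by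
    refine antitoneOn_of_hasDerivWithinAt_nonpos (convex_Ici 0)
      (fun τ hτ => (hΦ τ hτ).continuousAt.continuousWithinAt)
      (fun τ hτ => (hΦ τ (interior_subset hτ)).hasDerivWithinAt) fun τ hτ => ?_
    have hτ : 0 ≤ τ := interior_subset hτ
    have hexp : exp (-G τ) ≤ 1 :=
      exp_le_one_iff.2 (neg_nonpos.2 (intervalIntegral.integral_nonneg hτ fun s _ => hg₀ s))
    have := mul_le_mul_of_nonneg_left (sub_le_iff_le_add.2 (hW' τ hτ)) (exp_pos (-G τ)).le
    nlinarith [hh₀ τ]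
  have h0t := hanti self_mem_Ici ht ht
  simp only [G, H, intervalIntegral.integral_same, neg_zero, exp_zero, one_mul, sub_zero] at h0t
  have := mul_le_mul_of_nonneg_left (sub_le_iff_le_add.1 h0t) (exp_pos (G t)).le
  rwa [← mul_assoc, ← exp_add, add_neg_cancel, exp_zero, one_mul] at this

theorem hasDerivAt_dotProduct_mulVec {ι : Type*} [Fintype ι] {x : ℝ → ι → ℝ} {x' : ι → ℝ}
    {t : ℝ} (hx : HasDerivAt x x' t) {M : Matrix ι ι ℝ} (hM : M.IsHermitian) :
    HasDerivAt (fun τ => x τ ⬝ᵥ M *ᵥ x τ) (2 * (M *ᵥ x t ⬝ᵥ x')) t := by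
  have hMx : HasDerivAt (fun τ => M *ᵥ x τ) (M *ᵥ x') t :=
    hasDerivAt_pi.2 fun i => HasDerivAt.fun_sum fun j _ => (hasDerivAt_pi.1 hx j).const_mul _
  have := HasDerivAt.fun_sum (u := Finset.univ) fun i _ =>
    (hasDerivAt_pi.1 hx i).mul (hasDerivAt_pi.1 hMx i)
  refine this.congr_deriv ?_
  rw [Finset.sum_add_distrib]
  change x' ⬝ᵥ M *ᵥ x t + x t ⬝ᵥ M *ᵥ x' = 2 * (M *ᵥ x t ⬝ᵥ x')
  rw [hM.dotProduct_mulVec_comm (x t), dotProduct_comm x']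
  ring

section BilinearSystem

variable {ι κ : Type*} [Fintype ι] [DecidableEq ι] [Fintype κ]
  {A P : Matrix ι ι ℝ} {N : κ → Matrix ι ι ℝ} {B : Matrix ι κ ℝ} {u : ℝ → κ → ℝ} {x : ℝ → ι → ℝ}
  (hP : P.PosDef) (hL : ∀ r, r ⬝ᵥ (lyapunovOp A N P + B * Bᵀ) *ᵥ r ≤ 0)
  (hu : Continuous u) (huL2 : IntegrableOn (fun s => ∑ k, u s k ^ 2) (Set.Ioi 0))
  (hx0 : x 0 = 0)
  (hx : ∀ t, 0 ≤ t → ∀ i, HasDerivAt (fun τ => x τ i)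
    ((A *ᵥ x t + B *ᵥ u t + ∑ k, u t k • N k *ᵥ x t) i) t)
include hP hL hu huL2 hx0 hx

theorem dotProduct_inv_mulVec_le_exp_integral_mul {t : ℝ} (ht : 0 ≤ t) :
    x t ⬝ᵥ P⁻¹ *ᵥ x t
      ≤ Real.exp (∫ s in Set.Ioi 0, ∑ k, (if N k = 0 then 0 else u s k) ^ 2)
        * ∫ s in Set.Ioi 0, ∑ k, u s k ^ 2 := by
  set g := fun s => ∑ k, (if N k = 0 then 0 else u s k) ^ 2
  set h := fun s => ∑ k, u s k ^ 2
  have hg : Continuous g := continuous_finsetSum _ fun k _ => by split_ifs <;> fun_prop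
  have hh : Continuous h := by fun_prop
  have hg₀ : ∀ s, 0 ≤ g s := fun s => by positivity
  have hh₀ : ∀ s, 0 ≤ h s := fun s => by positivity
  have hgh : ∀ s, g s ≤ h s := fun s =>
    Finset.sum_le_sum fun k _ => by split_ifs <;> simp [sq_nonneg]
  have hgL1 : IntegrableOn g (Set.Ioi 0) :=
    huL2.mono' hg.aestronglyMeasurable (ae_of_all _ fun s => by
      rw [Real.norm_of_nonneg (hg₀ s)]
      exact hgh s)
  have hW := le_exp_integral_mul_of_hasDerivAt_le hg hh hg₀ hh₀
    (W := fun τ => x τ ⬝ᵥ P⁻¹ *ᵥ x τ)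
    (fun τ hτ => hasDerivAt_dotProduct_mulVec (hasDerivAt_pi.2 (hx τ hτ)) hP.inv.1)
    (fun τ _ => two_mul_inv_mulVec_dotProduct_le hP hL (x τ) (u τ)) ht
  simp only [hx0, zero_dotProduct, zero_add] at hW
  exact hW.trans (mul_le_mul (Real.exp_le_exp.2 (intervalIntegral_le_integral_Ioi hgL1 hg₀ ht))
    (intervalIntegral_le_integral_Ioi huL2 hh₀ ht)
    (intervalIntegral.integral_nonneg ht fun s _ => hh₀ s) (Real.exp_pos _).le)

theorem sq_dotProduct_le_mul_exp_integral_mul {t : ℝ} (ht : 0 ≤ t) (v : ι → ℝ) :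
    (x t ⬝ᵥ v) ^ 2
      ≤ (v ⬝ᵥ P *ᵥ v) * (Real.exp (∫ s in Set.Ioi 0, ∑ k, (if N k = 0 then 0 else u s k) ^ 2)
        * ∫ s in Set.Ioi 0, ∑ k, u s k ^ 2) := by
  have hvPv : 0 ≤ v ⬝ᵥ P *ᵥ v := by simpa using hP.posSemidef.dotProduct_mulVec_nonneg v
  calc (x t ⬝ᵥ v) ^ 2 ≤ (x t ⬝ᵥ P⁻¹ *ᵥ x t) * (v ⬝ᵥ P *ᵥ v) := hP.sq_dotProduct_le _ _
    _ ≤ _ := by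
      rw [mul_comm]
      exact mul_le_mul_of_nonneg_left
        (dotProduct_inv_mulVec_le_exp_integral_mul hP hL hu huL2 hx0 hx ht) hvPv

end BilinearSystem

/-- **Corollary: reachability estimate.** With `P` the reachability
Gramian and `(v_k, λ_k)` an orthonormal eigenbasis of `P`,
`sup_{t≥0} |⟨x(t), v_k⟩| ≤ λ_k^{1/2} exp(0.5 ‖u⁰‖²_{L²}) ‖u‖_{L²}` for each `k`. -/
theorem reachability_estimate
    {n m : ℕ}
    (A : Matrix (Fin n) (Fin n) ℝ) (N : Fin m → Matrix (Fin n) (Fin n) ℝ)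
    (B : Matrix (Fin n) (Fin m) ℝ)
    (u : ℝ → Fin m → ℝ) (hu : Continuous u)
    (huL2 : IntegrableOn (fun s => ∑ k, (u s k) ^ 2) (Set.Ioi (0:ℝ)))
    (u0 : ℝ → Fin m → ℝ) (hu0 : ∀ t k, u0 t k = if N k = 0 then 0 else u t k)
    -- x solves the bilinear state equation with x(0) = 0
    (x : ℝ → Fin n → ℝ) (hx0 : x 0 = 0)
    (hx : ∀ t : ℝ, 0 ≤ t → ∀ i, HasDerivAt (fun τ => x τ i)
      ((A.mulVec (x t) + B.mulVec (u t) + ∑ k, u t k • (N k).mulVec (x t)) i) t)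
    -- stability assumption
    (hstab : ∀ z ∈ spectrum ℂ ((A ⊗ₖ (1 : Matrix (Fin n) (Fin n) ℝ)
        + (1 : Matrix (Fin n) (Fin n) ℝ) ⊗ₖ A + ∑ k, N k ⊗ₖ N k).map Complex.ofReal),
        z.re < 0)
    -- P solves the generalized Lyapunov equation
    (P : Matrix (Fin n) (Fin n) ℝ)
    (hP : A * P + P * Aᵀ + (∑ k, N k * P * (N k)ᵀ) = -(B * Bᵀ))
    -- orthonormal basis of eigenvectors of P with eigenvalues λ
    (v : Fin n → Fin n → ℝ) (lam : Fin n → ℝ)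
    (horth : ∀ i j, v i ⬝ᵥ v j = if i = j then (1:ℝ) else 0)
    (heig : ∀ i, P.mulVec (v i) = lam i • v i) :
    ∀ i : Fin n, ∀ t : ℝ, 0 ≤ t →
      |x t ⬝ᵥ v i|
        ≤ Real.sqrt (lam i)
          * Real.exp (0.5 * ∫ s in Set.Ioi (0:ℝ), ∑ k, (u0 s k) ^ 2)
          * Real.sqrt (∫ s in Set.Ioi (0:ℝ), ∑ k, (u s k) ^ 2) := by
  intro i t ht
  obtain ⟨R, hR⟩ := exists_posDef_add_smul_of_lyapunovOp_eq (A := A) (N := N) hstab hP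
  have hvPv : ∀ ε : ℝ, v i ⬝ᵥ (P + ε • R) *ᵥ v i = lam i + ε * (v i ⬝ᵥ R *ᵥ v i) := fun ε => by
    rw [add_mulVec, dotProduct_add, heig, smul_mulVec, dotProduct_smul, dotProduct_smul, horth,
      if_pos rfl, smul_eq_mul, smul_eq_mul, mul_one]
  have hv : v i ≠ 0 := fun h => by simpa [h] using horth i i
  have hlam : 0 ≤ lam i := le_of_forall_pos_le_add_mul (c := v i ⬝ᵥ R *ᵥ v i) fun ε hε => by
    simpa [hvPv] using ((hR ε hε).1.dotProduct_mulVec_pos hv).le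
  set E := Real.exp (∫ s in Set.Ioi 0, ∑ k, (u0 s k) ^ 2) * ∫ s in Set.Ioi 0, ∑ k, u s k ^ 2
  have hsq : (x t ⬝ᵥ v i) ^ 2 ≤ lam i * E :=
    le_of_forall_pos_le_add_mul (c := (v i ⬝ᵥ R *ᵥ v i) * E) fun ε hε => by
      have := sq_dotProduct_le_mul_exp_integral_mul (hR ε hε).1 (hR ε hε).2 hu huL2 hx0 hx ht (v i)
      simp only [hvPv, ← hu0] at this
      linarith
  calc |x t ⬝ᵥ v i| ≤ √(lam i * E) := Real.abs_le_sqrt hsq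
    _ = _ := by
      rw [Real.sqrt_mul hlam, Real.sqrt_mul (Real.exp_pos _).le, ← Real.exp_half, ← mul_assoc]
      norm_num [div_eq_inv_mul]
end
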